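/- arXiv:0910.4957 — 2 statements merged into one kernel-verified Lean document; each statement's English description precedes it below -/
import Mathlib

section
/- Let f : [1, ∞) → [0, ∞) be non-increasing, and suppose there exist constants C > 0 and D ≥ 0 such that for all 1 ≤ τ₁ ≤ τ₂: ∫_{τ₁}^{τ₂} f(τ) dτ ≤ C τ₂^{-1} D + C f(τ₁). Then there is a constant C' (depending only on C) such that f(τ) ≤ C' (D + f(1)) τ^{-2} for all τ ≥ 1. (This is the two-step dyadic iteration lemma underlying the τ^{-2} energy decay in the paper.) -/
/-!
Since `f` is non-increasing, `∫_{τ₁}^{τ₂} f ≥ (τ₂ - τ₁) f(τ₂)`, so the hypothesis gives a pointwise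
bound for `f(τ₂)` in terms of `f(τ₁)`. Taking `τ₁ = 1` yields `τ f(τ) ≲ D + f(1)`; taking
`τ₁ = (τ + 1) / 2`, where the first bound already applies, gains a second factor of `τ`.
-/

open MeasureTheory Set

theorem AntitoneOn.sub_mul_le_intervalIntegral {f : ℝ → ℝ} {a b : ℝ} (hab : a ≤ b)
    (hf : AntitoneOn f (Icc a b)) : (b - a) * f b ≤ ∫ x in a..b, f x := by
  have hb : b ∈ Icc a b := right_mem_Icc.2 hab
  calc (b - a) * f b = ∫ _ in a..b, f b := by
        rw [intervalIntegral.integral_const, smul_eq_mul]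
    _ ≤ ∫ x in a..b, f x :=
        intervalIntegral.integral_mono_on hab intervalIntegrable_const
          ((uIcc_of_le hab ▸ hf).intervalIntegrable)
          fun x hx => hf hx hb hx.2

section IntegralDecay

variable {f : ℝ → ℝ} {C D : ℝ} (hf : AntitoneOn f (Ici 1))
  (hbound : ∀ τ₁ τ₂ : ℝ, 1 ≤ τ₁ → τ₁ ≤ τ₂ → (∫ τ in τ₁..τ₂, f τ) ≤ C * τ₂⁻¹ * D + C * f τ₁)

include hf hbound

theorem sub_mul_le_of_integral_le {τ₁ τ₂ : ℝ} (h₁ : 1 ≤ τ₁) (h₁₂ : τ₁ ≤ τ₂) :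
    (τ₂ - τ₁) * f τ₂ ≤ C * τ₂⁻¹ * D + C * f τ₁ :=
  (AntitoneOn.sub_mul_le_intervalIntegral h₁₂
    (hf.mono fun _ hx => le_trans h₁ hx.1)).trans (hbound τ₁ τ₂ h₁ h₁₂)

variable (hC : 0 ≤ C) (hD : 0 ≤ D)

include hC hD

theorem mul_le_of_integral_le {τ : ℝ} (hτ : 1 ≤ τ) : τ * f τ ≤ (C + 1) * (D + f 1) := by
  have hgap := sub_mul_le_of_integral_le hf hbound le_rfl hτ
  have hmono : f τ ≤ f 1 := hf self_mem_Ici hτ hτ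
  have hinv : τ⁻¹ ≤ 1 := inv_le_one_of_one_le₀ hτ
  have hCD : C * τ⁻¹ * D ≤ C * D := by
    rw [mul_right_comm]
    exact mul_le_of_le_one_right (mul_nonneg hC hD) hinv
  nlinarith

variable (hf₀ : ∀ τ ∈ Ici (1 : ℝ), 0 ≤ f τ)

include hf₀

theorem sq_mul_le_of_integral_le {τ : ℝ} (hτ : 1 ≤ τ) :
    τ ^ 2 * f τ ≤ (2 * C + (4 * C + 1) * (C + 1)) * (D + f 1) := by
  obtain ⟨σ, hσdef⟩ : ∃ σ : ℝ, 2 * σ = τ + 1 := ⟨(τ + 1) / 2, by ring⟩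
  have hσ : 1 ≤ σ := by linarith
  have hτ₀ : 0 < τ := by linarith
  have hgap := sub_mul_le_of_integral_le hf hbound hσ (by linarith : σ ≤ τ)
  have hfirst := mul_le_of_integral_le hf hbound hC hD hτ
  have hmid : τ * f σ ≤ 2 * ((C + 1) * (D + f 1)) :=
    calc τ * f σ ≤ 2 * σ * f σ :=
          mul_le_mul_of_nonneg_right (by linarith) (hf₀ σ hσ)
      _ ≤ 2 * ((C + 1) * (D + f 1)) := by
        rw [mul_assoc]
        exact mul_le_mul_of_nonneg_left (mul_le_of_integral_le hf hbound hC hD hσ) two_pos.le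
  have hgap' : τ * (τ - 1) * f τ ≤ 2 * C * D + 2 * C * (τ * f σ) :=
    calc τ * (τ - 1) * f τ = 2 * τ * ((τ - σ) * f τ) := by linear_combination τ * f τ * hσdef
      _ ≤ 2 * τ * (C * τ⁻¹ * D + C * f σ) := mul_le_mul_of_nonneg_left hgap (by positivity)
      _ = 2 * C * D + 2 * C * (τ * f σ) := by field_simp
  have hsplit : τ ^ 2 * f τ = τ * (τ - 1) * f τ + τ * f τ := by ring
  nlinarith [hf₀ 1 self_mem_Ici]

end IntegralDecay

/-- Two-step dyadic iteration lemma: if non-increasing nonnegative `f` satisfies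
`∫_{τ₁}^{τ₂} f ≤ C τ₂⁻¹ D + C f(τ₁)` for all `1 ≤ τ₁ ≤ τ₂`, then
`f(τ) ≤ C' (D + f(1)) τ⁻²`, with `C'` depending only on `C`. -/
theorem stmt_1 (C : ℝ) (hC : 0 < C) :
    ∃ C' : ℝ, 0 < C' ∧
      ∀ (f : ℝ → ℝ) (D : ℝ), 0 ≤ D →
        AntitoneOn f (Ici 1) →
        (∀ τ ∈ Ici (1 : ℝ), 0 ≤ f τ) →
        (∀ τ₁ τ₂ : ℝ, 1 ≤ τ₁ → τ₁ ≤ τ₂ → IntervalIntegrable f volume τ₁ τ₂) →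
        (∀ τ₁ τ₂ : ℝ, 1 ≤ τ₁ → τ₁ ≤ τ₂ →
          (∫ τ in τ₁..τ₂, f τ) ≤ C * τ₂⁻¹ * D + C * f τ₁) →
        ∀ τ : ℝ, 1 ≤ τ → f τ ≤ C' * (D + f 1) / τ ^ 2 := by
  refine ⟨2 * C + (4 * C + 1) * (C + 1), by positivity, ?_⟩
  intro f D hD hf hf₀ _ hbound τ hτ
  rw [le_div_iff₀ (by positivity), mul_comm]
  exact sq_mul_le_of_integral_le hf hbound hC.le hD hf₀ hτ
end

section
/- Suppose e, h : [1, ∞) → [0, ∞) with e non-increasing, and suppose there exist constants C > 0 such that: (1) for every τ there exists τ' ∈ [τ, 2τ] with h(τ') ≤ C/τ; (2) for all 1 ≤ τ₁ ≤ τ₂, ∫_{τ₁}^{τ₂} e(τ)dτ ≤ C(h(τ₁) + e(τ₁)); and (3) h(τ₂) ≤ C(h(τ₁) + e(τ₁)) for τ₁ ≤ τ₂. Then e(τ) ≤ C' τ^{-2} for all τ ≥ 1, for some constant C' depending only on C and e(1), h(1). (Abstract form of the hierarchy argument: h plays the role of the p=1 weighted flux, e of the energy.) -/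
/-!
Since `e` is non-increasing, (2) on `[τ, 2τ]` gives the doubling estimate
`τ e(2τ) ≤ C (k τ + e τ)`: one power of decay for `e` beyond that of `k + e`.
Hypothesis (3) from `τ₁ = 1` bounds `k`, so `e ≲ τ⁻¹`. Propagating the good value
`k(τ') ≲ τ⁻¹` from (1) forward with (3) upgrades this to `k ≲ τ⁻¹`, and a second
use of the doubling estimate gives `e ≲ τ⁻²`.
-/

open MeasureTheory Set

theorem sub_mul_le_intervalIntegral_of_antitoneOn {f : ℝ → ℝ} {a b : ℝ} (hab : a ≤ b)
    (hf : AntitoneOn f (Icc a b)) (hint : IntervalIntegrable f volume a b) :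
    (b - a) * f b ≤ ∫ x in a..b, f x := by
  simpa using intervalIntegral.integral_mono_on hab intervalIntegrable_const hint
    fun x hx => hf hx (right_mem_Icc.2 hab) hx.2

theorem le_div_pow_succ_of_mul_two_mul_le {e : ℝ → ℝ} {M : ℝ} (n : ℕ)
    (he0 : ∀ τ ∈ Ici (1 : ℝ), 0 ≤ e τ) (hmono : AntitoneOn e (Ici 1))
    (hdouble : ∀ τ : ℝ, 1 ≤ τ → τ * e (2 * τ) ≤ M / τ ^ n) {σ : ℝ} (hσ : 1 ≤ σ) :
    e σ ≤ 2 ^ (n + 1) * (M + e 1) / σ ^ (n + 1) := by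
  have he1 : 0 ≤ e 1 := he0 1 self_mem_Ici
  have hM : 0 ≤ M := by
    have := hdouble 1 le_rfl
    norm_num at this
    linarith [he0 2 (by norm_num)]
  rw [le_div_iff₀ (by positivity)]
  rcases le_or_gt σ 2 with hσ2 | hσ2
  · calc e σ * σ ^ (n + 1) ≤ e 1 * 2 ^ (n + 1) :=
          mul_le_mul (hmono self_mem_Ici hσ hσ) (pow_le_pow_left₀ (by linarith) hσ2 _)
            (by positivity) he1
      _ ≤ 2 ^ (n + 1) * (M + e 1) := by rw [mul_comm]; gcongr; linarith
  · obtain ⟨τ, rfl⟩ : ∃ τ, σ = 2 * τ := ⟨σ / 2, by ring⟩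
    have hτ : 1 ≤ τ := by linarith
    have hsmall : e (2 * τ) * τ ^ (n + 1) ≤ M := by
      have := hdouble τ hτ
      rw [le_div_iff₀ (by positivity)] at this
      linarith [show e (2 * τ) * τ ^ (n + 1) = τ * e (2 * τ) * τ ^ n by ring]
    calc e (2 * τ) * (2 * τ) ^ (n + 1) = 2 ^ (n + 1) * (e (2 * τ) * τ ^ (n + 1)) := by ring
      _ ≤ 2 ^ (n + 1) * (M + e 1) := by gcongr; linarith

theorem le_div_of_exists_le_div_of_le_add {e k : ℝ → ℝ} {C A : ℝ} (hC : 0 ≤ C)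
    (he0 : ∀ τ ∈ Ici (1 : ℝ), 0 ≤ e τ) (hk1 : 0 ≤ k 1) (hmono : AntitoneOn e (Ici 1))
    (he : ∀ τ : ℝ, 1 ≤ τ → e τ ≤ A / τ)
    (h1 : ∀ τ : ℝ, 1 ≤ τ → ∃ τ' ∈ Icc τ (2 * τ), k τ' ≤ C / τ)
    (h3 : ∀ τ₁ τ₂ : ℝ, 1 ≤ τ₁ → τ₁ ≤ τ₂ → k τ₂ ≤ C * (k τ₁ + e τ₁)) {σ : ℝ} (hσ : 1 ≤ σ) :
    k σ ≤ 2 * (C * (C + A) + C * (k 1 + e 1)) / σ := by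
  have hA : 0 ≤ A := by simpa using (he0 1 self_mem_Ici).trans (he 1 le_rfl)
  have hK : 0 ≤ C * (k 1 + e 1) := by have := he0 1 self_mem_Ici; positivity
  have hCA : 0 ≤ C * (C + A) := by positivity
  rw [le_div_iff₀ (by positivity)]
  rcases le_or_gt σ 2 with hσ2 | hσ2
  · nlinarith [h3 1 σ le_rfl hσ]
  · obtain ⟨τ, rfl⟩ : ∃ τ, σ = 2 * τ := ⟨σ / 2, by ring⟩
    have hτ : 1 ≤ τ := by linarith
    obtain ⟨τ', ⟨hττ', hτ'σ⟩, hkτ'⟩ := h1 τ hτ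
    have heτ' : e τ' ≤ A / τ := (hmono hτ (hτ.trans hττ') hττ').trans (he τ hτ)
    calc k (2 * τ) * (2 * τ) ≤ C * (k τ' + e τ') * (2 * τ) := by
          gcongr; exact h3 τ' _ (hτ.trans hττ') hτ'σ
      _ ≤ C * (C / τ + A / τ) * (2 * τ) := by gcongr
      _ = 2 * (C * (C + A)) := by field_simp
      _ ≤ 2 * (C * (C + A) + C * (k 1 + e 1)) := by linarith

/-- Abstract form of the hierarchy argument: `k` plays the role of the `p = 1`
weighted flux and `e` of the energy.  If (1) on each dyadic interval there is a
good time where `k(τ') ≤ C/τ`, (2) `∫_{τ₁}^{τ₂} e ≤ C (k(τ₁) + e(τ₁))`, and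
(3) `k(τ₂) ≤ C (k(τ₁) + e(τ₁))`, then `e(τ) ≤ C' τ⁻²` for a constant `C'`
depending only on `C`, `e(1)`, `k(1)`. -/
theorem stmt_11 (e k : ℝ → ℝ) (C : ℝ) (hC : 0 < C)
    (he0 : ∀ τ ∈ Ici (1 : ℝ), 0 ≤ e τ)
    (hk0 : ∀ τ ∈ Ici (1 : ℝ), 0 ≤ k τ)
    (hmono : AntitoneOn e (Ici 1))
    (heint : ∀ τ₁ τ₂ : ℝ, 1 ≤ τ₁ → τ₁ ≤ τ₂ → IntervalIntegrable e volume τ₁ τ₂)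
    (h1 : ∀ τ : ℝ, 1 ≤ τ → ∃ τ' ∈ Icc τ (2 * τ), k τ' ≤ C / τ)
    (h2 : ∀ τ₁ τ₂ : ℝ, 1 ≤ τ₁ → τ₁ ≤ τ₂ →
      (∫ τ in τ₁..τ₂, e τ) ≤ C * (k τ₁ + e τ₁))
    (h3 : ∀ τ₁ τ₂ : ℝ, 1 ≤ τ₁ → τ₁ ≤ τ₂ → k τ₂ ≤ C * (k τ₁ + e τ₁)) :
    ∃ C' : ℝ, 0 < C' ∧ ∀ τ : ℝ, 1 ≤ τ → e τ ≤ C' / τ ^ 2 := by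
  have hdouble : ∀ τ : ℝ, 1 ≤ τ → τ * e (2 * τ) ≤ C * (k τ + e τ) := fun τ hτ => by
    have hτ2 : τ ≤ 2 * τ := by linarith
    have := sub_mul_le_intervalIntegral_of_antitoneOn hτ2
      (hmono.mono fun x hx => hτ.trans hx.1) (heint τ _ hτ hτ2)
    linarith [h2 τ _ hτ hτ2]
  obtain ⟨A, he⟩ : ∃ A, ∀ τ : ℝ, 1 ≤ τ → e τ ≤ A / τ :=
    ⟨_, fun τ hτ => by
      simpa using le_div_pow_succ_of_mul_two_mul_le 0 (M := C * (C * (k 1 + e 1) + e 1))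
        he0 hmono (fun t ht => by
          rw [pow_zero, div_one]
          exact (hdouble t ht).trans <| by
            gcongr; exacts [h3 1 t le_rfl ht, hmono self_mem_Ici ht ht]) hτ⟩
  obtain ⟨B, hk⟩ : ∃ B, ∀ τ : ℝ, 1 ≤ τ → k τ ≤ B / τ :=
    ⟨_, fun τ hτ => le_div_of_exists_le_div_of_le_add hC.le he0 (hk0 1 self_mem_Ici)
      hmono he h1 h3 hτ⟩
  have he' : ∀ σ : ℝ, 1 ≤ σ → e σ ≤ 2 ^ 2 * (C * (B + A) + e 1) / σ ^ 2 :=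
    fun σ hσ => le_div_pow_succ_of_mul_two_mul_le 1 he0 hmono (fun τ hτ => by
      rw [pow_one, mul_div_assoc, add_div]
      exact (hdouble τ hτ).trans (by gcongr; exacts [hk τ hτ, he τ hτ])) hσ
  exact ⟨max (2 ^ 2 * (C * (B + A) + e 1)) 1, lt_max_of_lt_right one_pos,
    fun τ hτ => (he' τ hτ).trans (by gcongr; exact le_max_left _ _)⟩
end
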